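/- Fix n ≥ 2 and let f be the explicit function on subsets of N = {a,b,c,x_1,...,x_n} defined in the paper. Then f satisfies the constraints f(a:c|b) = f(b:c|a) = 0, and for all integers p ≥ 2 and all choices of pairwise disjoint subsets α_1,...,α_p ⊆ {x_1,...,x_n}, the quantity L = Σ_{i=1}^p f(a:b|α_i) - (p-1) f(ab:c|∅) + Σ_{i=1}^p f(α_i) - f(α_1∪...∪α_p) equals n(n+1)(n - p - 1 + 2Δ), where Δ is the number of empty sets among the α_i; consequently L < 0 if and only if p = n and all α_i are nonempty. -/
import Mathlib


open Finset BigOperators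

noncomputable section

/-- A set function is submodular if `f(M₁) + f(M₂) ≥ f(M₁ ∪ M₂) + f(M₁ ∩ M₂)`. -/
def Submodular {N : Type*} [DecidableEq N] (f : Finset N → ℝ) : Prop :=
  ∀ M₁ M₂ : Finset N, f M₁ + f M₂ ≥ f (M₁ ∪ M₂) + f (M₁ ∩ M₂)

/-- The conditional mutual information `f(α:β|γ)` of a set function. -/
def cmi {N : Type*} [DecidableEq N] (f : Finset N → ℝ) (α β γ : Finset N) : ℝ :=
  -f γ + f (α ∪ γ) + f (β ∪ γ) - f (α ∪ β ∪ γ)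

abbrev Idx (n : ℕ) := Sum (Fin 3) (Fin n)

/-- The constants `θ_K` of the paper, indexed by membership of `a`, `b`, `c` in `K`. -/
def theta (n : ℝ) : Bool → Bool → Bool → ℝ
  | true,  true,  true  => (n+1) * (2*n^3 + 8*n^2 + 4*n - 1)
  | true,  true,  false => (n+1) * (2*n^3 + 8*n^2 + 4*n - 1)
  | true,  false, true  => (n+1) * (2*n^3 + 5*n^2 + 2*n)
  | false, true,  true  => (n+1) * (6*n^2 + 4*n - 1)
  | true,  false, false => (n+1) * (2*n^3 + 5*n^2)
  | false, true,  false => (n+1) * (4*n^2 + 2*n - 1)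
  | false, false, true  => (n+1) * (3*n^2 + n)
  | false, false, false => 0

/-- The constants `λ_K` of the paper, indexed by membership of `a`, `b`, `c` in `K`. -/
def lam (n : ℝ) : Bool → Bool → Bool → ℝ
  | true,  true,  true  => -(2*n^3 + 8*n^2 + 4*n - 1)
  | true,  true,  false => -(2*n^3 + 8*n^2 + 4*n - 1)
  | true,  false, true  => -(2*n^3 + 5*n^2 + 2*n)
  | false, true,  true  => -(6*n^2 + 4*n - 1)
  | true,  false, false => -(2*n^3 + 5*n^2 + 2*n)
  | false, true,  false => -(4*n^2 + 2*n - 1)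
  | false, false, true  => -(4*n^2 + 2*n - 1)
  | false, false, false => -(n^2)

/-- The explicit function `f(JK) = θ_K + |J| λ_K - μ_{JK}` of the paper on the ground set
`{a, b, c, x_1, …, x_n}`, with `a = inl 0`, `b = inl 1`, `c = inl 2`, `x_i = inr i`;
`μ` is nonzero only on `{a}` (value `2n²(n+1)`) and `{a,b}` (value `2n(n+1)²`). -/
noncomputable def fpaper (n : ℕ) (M : Finset (Idx n)) : ℝ :=
  theta (n : ℝ) (decide ((Sum.inl 0 : Idx n) ∈ M)) (decide ((Sum.inl 1 : Idx n) ∈ M))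
      (decide ((Sum.inl 2 : Idx n) ∈ M))
    + ((M.filter (fun i => i.isRight = true)).card : ℝ) *
      lam (n : ℝ) (decide ((Sum.inl 0 : Idx n) ∈ M)) (decide ((Sum.inl 1 : Idx n) ∈ M))
        (decide ((Sum.inl 2 : Idx n) ∈ M))
    - (if M = ({Sum.inl 0} : Finset (Idx n)) then 2 * (n : ℝ)^2 * ((n : ℝ) + 1)
       else if M = ({Sum.inl 0, Sum.inl 1} : Finset (Idx n)) then 2 * (n : ℝ) * ((n : ℝ) + 1)^2
       else 0)


lemma union_eq_left_set {n : ℕ} {S α T : Finset (Idx n)} (hα : ∀ x ∈ α, x.isRight = true)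
    (hT : ∀ x ∈ T, x.isLeft = true) : S ∪ α = T ↔ α = ∅ ∧ S = T := by
  constructor
  · intro h
    have hαe : α = ∅ := by
      rw [Finset.eq_empty_iff_forall_notMem]
      intro x hx
      have h1 := hα x hx
      have h2 := hT x (h ▸ Finset.mem_union_right S hx)
      cases x <;> simp_all
    refine ⟨hαe, ?_⟩
    rw [hαe, Finset.union_empty] at h
    exact h
  · rintro ⟨h1, h2⟩
    rw [h1, Finset.union_empty, h2]

lemma mem_union_left_iff {n : ℕ} {α : Finset (Idx n)} (hα : ∀ x ∈ α, x.isRight = true)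
    (S : Finset (Idx n)) (i : Fin 3) : (Sum.inl i ∈ S ∪ α) ↔ Sum.inl i ∈ S := by
  simp only [Finset.mem_union, or_iff_left_iff_imp]
  intro h
  exact absurd (hα _ h) (by simp)

lemma filter_union_right {n : ℕ} {S α : Finset (Idx n)} (hα : ∀ x ∈ α, x.isRight = true)
    (hS : ∀ x ∈ S, x.isLeft = true) :
    (S ∪ α).filter (fun i => i.isRight = true) = α := by
  rw [Finset.filter_union, Finset.filter_eq_empty_iff.2, Finset.empty_union,
    Finset.filter_eq_self.2 hα]
  intro x hx
  have := hS x hx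
  cases x <;> simp_all

lemma fpaper_union {n : ℕ} {S α : Finset (Idx n)} (hα : ∀ x ∈ α, x.isRight = true)
    (hS : ∀ x ∈ S, x.isLeft = true) :
    fpaper n (S ∪ α) = theta (n : ℝ) (decide ((Sum.inl 0 : Idx n) ∈ S))
        (decide ((Sum.inl 1 : Idx n) ∈ S)) (decide ((Sum.inl 2 : Idx n) ∈ S))
      + (α.card : ℝ) * lam (n : ℝ) (decide ((Sum.inl 0 : Idx n) ∈ S))
        (decide ((Sum.inl 1 : Idx n) ∈ S)) (decide ((Sum.inl 2 : Idx n) ∈ S))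
      - (if α = ∅ ∧ S = ({Sum.inl 0} : Finset (Idx n)) then 2 * (n : ℝ)^2 * ((n : ℝ) + 1)
         else if α = ∅ ∧ S = ({Sum.inl 0, Sum.inl 1} : Finset (Idx n)) then 2 * (n : ℝ) * ((n : ℝ) + 1)^2
         else 0) := by
  rw [fpaper]
  simp only [mem_union_left_iff hα, filter_union_right hα hS,
    union_eq_left_set hα (show ∀ x ∈ ({Sum.inl 0} : Finset (Idx n)), x.isLeft = true by
      intro x hx; fin_cases hx; simp),
    union_eq_left_set hα (show ∀ x ∈ ({Sum.inl 0, Sum.inl 1} : Finset (Idx n)), x.isLeft = true by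
      intro x hx; fin_cases hx <;> simp)]

lemma fpaper_alpha {n : ℕ} {α : Finset (Idx n)} (hα : ∀ x ∈ α, x.isRight = true) :
    fpaper n α = -(α.card : ℝ) * (n : ℝ)^2 := by
  have := fpaper_union (S := (∅ : Finset (Idx n))) hα (by simp)
  rw [Finset.empty_union] at this
  rw [this]
  have h1 : (∅ : Finset (Idx n)) ≠ {Sum.inl 0} := Ne.symm (Finset.singleton_ne_empty _)
  have h2 : (∅ : Finset (Idx n)) ≠ {Sum.inl 0, Sum.inl 1} := Ne.symm (Finset.insert_ne_empty _ _)
  simp [theta, lam, h1, h2]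

lemma cmi_ab {n : ℕ} {α : Finset (Idx n)} (hα : ∀ x ∈ α, x.isRight = true) :
    cmi (fpaper n) {Sum.inl 0} {Sum.inl 1} α =
      (n : ℝ) * ((n : ℝ) + 1) * ((n : ℝ) - 2) +
        (if α = ∅ then 2 * (n : ℝ) * ((n : ℝ) + 1) else 0) := by
  have hu : ({Sum.inl 0} : Finset (Idx n)) ∪ {Sum.inl 1} = {Sum.inl 0, Sum.inl 1} := rfl
  rw [cmi, hu, fpaper_alpha hα,
    fpaper_union (S := {Sum.inl 0}) hα (by intro x hx; fin_cases hx; simp),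
    fpaper_union (S := {Sum.inl 1}) hα (by intro x hx; fin_cases hx; simp),
    fpaper_union (S := {Sum.inl 0, Sum.inl 1}) hα (by intro x hx; fin_cases hx <;> simp)]
  have e01 : (Sum.inl 0 : Idx n) ≠ Sum.inl 1 := by simp
  have e10 : (Sum.inl 1 : Idx n) ≠ Sum.inl 0 := by simp
  have s10 : ({Sum.inl 1} : Finset (Idx n)) ≠ {Sum.inl 0} := by
    intro h
    have : (Sum.inl 1 : Idx n) ∈ ({Sum.inl 0} : Finset (Idx n)) := by rw [← h]; simp
    simp at this
  have s1ab : ({Sum.inl 1} : Finset (Idx n)) ≠ {Sum.inl 0, Sum.inl 1} := by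
    intro h
    have : (Sum.inl 0 : Idx n) ∈ ({Sum.inl 1} : Finset (Idx n)) := by rw [h]; simp
    simp at this
  have sab0 : ({Sum.inl 0, Sum.inl 1} : Finset (Idx n)) ≠ {Sum.inl 0} := by
    intro h
    have : (Sum.inl 1 : Idx n) ∈ ({Sum.inl 0} : Finset (Idx n)) := by rw [← h]; simp
    simp at this
  have s0ab : ({Sum.inl 0} : Finset (Idx n)) ≠ {Sum.inl 0, Sum.inl 1} := by
    intro h
    have : (Sum.inl 1 : Idx n) ∈ ({Sum.inl 0} : Finset (Idx n)) := by rw [h]; simp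
    simp at this
  by_cases h : α = ∅ <;>
    simp [theta, lam, h, e01, e10, s10, s1ab, sab0, s0ab] <;> ring

lemma fpaper_left {n : ℕ} {S : Finset (Idx n)} (hS : ∀ x ∈ S, x.isLeft = true) :
    fpaper n S = theta (n : ℝ) (decide ((Sum.inl 0 : Idx n) ∈ S))
        (decide ((Sum.inl 1 : Idx n) ∈ S)) (decide ((Sum.inl 2 : Idx n) ∈ S))
      - (if S = ({Sum.inl 0} : Finset (Idx n)) then 2 * (n : ℝ)^2 * ((n : ℝ) + 1)
         else if S = ({Sum.inl 0, Sum.inl 1} : Finset (Idx n)) then 2 * (n : ℝ) * ((n : ℝ) + 1)^2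
         else 0) := by
  have := fpaper_union (S := S) (α := (∅ : Finset (Idx n))) (by simp) hS
  rw [Finset.union_empty] at this
  rw [this]
  simp

lemma ne_mu_of_mem_two {n : ℕ} {S : Finset (Idx n)} (h : Sum.inl 2 ∈ S) :
    S ≠ ({Sum.inl 0} : Finset (Idx n)) ∧ S ≠ ({Sum.inl 0, Sum.inl 1} : Finset (Idx n)) := by
  constructor <;> intro he <;> rw [he] at h <;> simp at h

lemma ne_mu_of_mem_one {n : ℕ} {S : Finset (Idx n)} (h : Sum.inl 1 ∈ S) :
    S ≠ ({Sum.inl 0} : Finset (Idx n)) := by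
  intro he; rw [he] at h; simp at h

lemma ne_mu_of_notMem_zero {n : ℕ} {S : Finset (Idx n)} (h : Sum.inl 0 ∉ S) :
    S ≠ ({Sum.inl 0} : Finset (Idx n)) ∧ S ≠ ({Sum.inl 0, Sum.inl 1} : Finset (Idx n)) := by
  constructor <;> intro he <;> rw [he] at h <;> simp at h

lemma constraint1 (n : ℕ) : cmi (fpaper n) {Sum.inl 0} {Sum.inl 2} {Sum.inl 1} = 0 := by
  rw [cmi,
    show ({Sum.inl 0} : Finset (Idx n)) ∪ {Sum.inl 1} = {Sum.inl 0, Sum.inl 1} from rfl,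
    show ({Sum.inl 2} : Finset (Idx n)) ∪ {Sum.inl 1} = {Sum.inl 2, Sum.inl 1} from rfl,
    show ({Sum.inl 0} : Finset (Idx n)) ∪ {Sum.inl 2} ∪ {Sum.inl 1}
      = {Sum.inl 0, Sum.inl 2, Sum.inl 1} from rfl,
    fpaper_left (S := ({Sum.inl 1} : Finset (Idx n))) (by intro x hx; fin_cases hx; simp),
    fpaper_left (S := ({Sum.inl 0, Sum.inl 1} : Finset (Idx n))) (by intro x hx; fin_cases hx <;> simp),
    fpaper_left (S := ({Sum.inl 2, Sum.inl 1} : Finset (Idx n))) (by intro x hx; fin_cases hx <;> simp),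
    fpaper_left (S := ({Sum.inl 0, Sum.inl 2, Sum.inl 1} : Finset (Idx n))) (by intro x hx; fin_cases hx <;> simp)]
  have n1 := ne_mu_of_notMem_zero (n := n) (S := {Sum.inl 1}) (by simp)
  have n2 := ne_mu_of_mem_one (n := n) (S := {Sum.inl 0, Sum.inl 1}) (by simp)
  have n3 := ne_mu_of_mem_two (n := n) (S := {Sum.inl 2, Sum.inl 1}) (by simp)
  have n4 := ne_mu_of_mem_two (n := n) (S := {Sum.inl 0, Sum.inl 2, Sum.inl 1}) (by simp)
  simp [theta, n1.1, n1.2, n2, n3.1, n3.2, n4.1, n4.2]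
  ring

lemma constraint2 (n : ℕ) : cmi (fpaper n) {Sum.inl 1} {Sum.inl 2} {Sum.inl 0} = 0 := by
  rw [cmi,
    show ({Sum.inl 1} : Finset (Idx n)) ∪ {Sum.inl 0} = {Sum.inl 1, Sum.inl 0} from rfl,
    show ({Sum.inl 2} : Finset (Idx n)) ∪ {Sum.inl 0} = {Sum.inl 2, Sum.inl 0} from rfl,
    show ({Sum.inl 1} : Finset (Idx n)) ∪ {Sum.inl 2} ∪ {Sum.inl 0}
      = {Sum.inl 1, Sum.inl 2, Sum.inl 0} from rfl,
    fpaper_left (S := ({Sum.inl 0} : Finset (Idx n))) (by intro x hx; fin_cases hx; simp),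
    fpaper_left (S := ({Sum.inl 1, Sum.inl 0} : Finset (Idx n))) (by intro x hx; fin_cases hx <;> simp),
    fpaper_left (S := ({Sum.inl 2, Sum.inl 0} : Finset (Idx n))) (by intro x hx; fin_cases hx <;> simp),
    fpaper_left (S := ({Sum.inl 1, Sum.inl 2, Sum.inl 0} : Finset (Idx n))) (by intro x hx; fin_cases hx <;> simp)]
  have n0 : ({Sum.inl 0} : Finset (Idx n)) = {Sum.inl 0} := rfl
  have n1 := ne_mu_of_mem_one (n := n) (S := {Sum.inl 1, Sum.inl 0}) (by simp)
  have h10 : ({Sum.inl 1, Sum.inl 0} : Finset (Idx n)) = {Sum.inl 0, Sum.inl 1} :=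
    Finset.pair_comm _ _
  have n3 := ne_mu_of_mem_two (n := n) (S := {Sum.inl 2, Sum.inl 0}) (by simp)
  have n4 := ne_mu_of_mem_two (n := n) (S := {Sum.inl 1, Sum.inl 2, Sum.inl 0}) (by simp)
  have n2 := ne_mu_of_mem_one (n := n) (S := {Sum.inl 0, Sum.inl 1}) (by simp)
  simp [theta, n0, h10, n2, n3.1, n3.2, n4.1, n4.2]
  ring

lemma constraint3 (n : ℕ) : cmi (fpaper n) {Sum.inl 0, Sum.inl 1} {Sum.inl 2} ∅ =
    (n : ℝ) * ((n : ℝ) + 1) * ((n : ℝ) - 1) := by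
  rw [cmi,
    show ({Sum.inl 0, Sum.inl 1} : Finset (Idx n)) ∪ ∅ = {Sum.inl 0, Sum.inl 1} from
      Finset.union_empty _,
    show ({Sum.inl 2} : Finset (Idx n)) ∪ ∅ = {Sum.inl 2} from Finset.union_empty _,
    show ({Sum.inl 0, Sum.inl 1} : Finset (Idx n)) ∪ {Sum.inl 2} ∪ ∅
      = {Sum.inl 0, Sum.inl 1, Sum.inl 2} from by rw [Finset.union_empty]; rfl,
    fpaper_left (S := (∅ : Finset (Idx n))) (by simp),
    fpaper_left (S := ({Sum.inl 0, Sum.inl 1} : Finset (Idx n))) (by intro x hx; fin_cases hx <;> simp),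
    fpaper_left (S := ({Sum.inl 2} : Finset (Idx n))) (by intro x hx; fin_cases hx; simp),
    fpaper_left (S := ({Sum.inl 0, Sum.inl 1, Sum.inl 2} : Finset (Idx n))) (by intro x hx; fin_cases hx <;> simp)]
  have e1 : (∅ : Finset (Idx n)) ≠ {Sum.inl 0} := Ne.symm (Finset.singleton_ne_empty _)
  have e2 : (∅ : Finset (Idx n)) ≠ {Sum.inl 0, Sum.inl 1} := Ne.symm (Finset.insert_ne_empty _ _)
  have n2 := ne_mu_of_mem_one (n := n) (S := {Sum.inl 0, Sum.inl 1}) (by simp)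
  have n3 := ne_mu_of_mem_two (n := n) (S := {Sum.inl 2}) (by simp)
  have n4 := ne_mu_of_mem_two (n := n) (S := {Sum.inl 0, Sum.inl 1, Sum.inl 2}) (by simp)
  simp [theta, e1, e2, n2, n3.1, n3.2, n4.1, n4.2]
  ring
/-- The explicit function `f` of the paper satisfies the constraints
`f(a:c|b) = f(b:c|a) = 0`, and each instance of `C_p` evaluates on `f` to
`n(n+1)(n - p - 1 + 2Δ)`, where `Δ` is the number of empty sets among the `α_i`;
hence the instance is violated iff `p = n` and all `α_i` are nonempty. -/
theorem fpaper_values (n : ℕ) (hn : 2 ≤ n) :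
    cmi (fpaper n) {Sum.inl 0} {Sum.inl 2} {Sum.inl 1} = 0 ∧
    cmi (fpaper n) {Sum.inl 1} {Sum.inl 2} {Sum.inl 0} = 0 ∧
    ∀ (p : ℕ), 2 ≤ p → ∀ α : Fin p → Finset (Idx n),
      (∀ i, ∀ x ∈ α i, x.isRight = true) →
      (∀ i j, i ≠ j → Disjoint (α i) (α j)) →
      ((∑ i, cmi (fpaper n) {Sum.inl 0} {Sum.inl 1} (α i)) -
            ((p : ℝ) - 1) * cmi (fpaper n) {Sum.inl 0, Sum.inl 1} {Sum.inl 2} ∅ +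
            (∑ i, fpaper n (α i)) - fpaper n (Finset.univ.biUnion α) =
          (n : ℝ) * ((n : ℝ) + 1) *
            ((n : ℝ) - (p : ℝ) - 1 +
              2 * ((Finset.univ.filter (fun i => α i = ∅)).card : ℝ))) ∧
        ((∑ i, cmi (fpaper n) {Sum.inl 0} {Sum.inl 1} (α i)) -
            ((p : ℝ) - 1) * cmi (fpaper n) {Sum.inl 0, Sum.inl 1} {Sum.inl 2} ∅ +
            (∑ i, fpaper n (α i)) - fpaper n (Finset.univ.biUnion α) < 0 ↔
          p = n ∧ ∀ i, α i ≠ ∅) := by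
  refine ⟨constraint1 n, constraint2 n, ?_⟩
  intro p hp α hright hdis
  set Δ : ℕ := (Finset.univ.filter (fun i => α i = ∅)).card with hΔ
  -- sum of cmi's
  have hsum1 : (∑ i, cmi (fpaper n) {Sum.inl 0} {Sum.inl 1} (α i)) =
      (p : ℝ) * ((n : ℝ) * ((n : ℝ) + 1) * ((n : ℝ) - 2)) + (Δ : ℝ) * (2 * (n : ℝ) * ((n : ℝ) + 1)) := by
    rw [Finset.sum_congr rfl (fun i _ => cmi_ab (hright i)), Finset.sum_add_distrib,
      Finset.sum_const, ← Finset.sum_filter, Finset.sum_const, Finset.card_univ,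
      Fintype.card_fin, nsmul_eq_mul, nsmul_eq_mul]
  -- sum of f's cancels
  have hcard : ((Finset.univ.biUnion α).card : ℝ) = ∑ i, ((α i).card : ℝ) := by
    rw [Finset.card_biUnion (fun i _ j _ h => hdis i j h)]
    push_cast
    rfl
  have hbr : ∀ x ∈ Finset.univ.biUnion α, x.isRight = true := by
    intro x hx
    rcases Finset.mem_biUnion.1 hx with ⟨i, _, hxi⟩
    exact hright i x hxi
  have hsum2 : (∑ i, fpaper n (α i)) - fpaper n (Finset.univ.biUnion α) = 0 := by
    rw [Finset.sum_congr rfl (fun i _ => fpaper_alpha (hright i)), fpaper_alpha hbr, hcard,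
      ← Finset.sum_mul, Finset.sum_neg_distrib]
    ring
  have key : (∑ i, cmi (fpaper n) {Sum.inl 0} {Sum.inl 1} (α i)) -
      ((p : ℝ) - 1) * cmi (fpaper n) {Sum.inl 0, Sum.inl 1} {Sum.inl 2} ∅ +
      (∑ i, fpaper n (α i)) - fpaper n (Finset.univ.biUnion α) =
      (n : ℝ) * ((n : ℝ) + 1) * ((n : ℝ) - (p : ℝ) - 1 + 2 * (Δ : ℝ)) := by
    rw [hsum1, constraint3]
    linear_combination hsum2
  refine ⟨key, ?_⟩
  rw [key]
  -- combinatorial bound: p ≤ n + Δ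
  have hsplit : Δ + (Finset.univ.filter (fun i => ¬ α i = ∅)).card = p := by
    rw [hΔ, Finset.card_filter_add_card_filter_not, Finset.card_univ, Fintype.card_fin]
  have hT : (Finset.univ.filter (fun i => ¬ α i = ∅)).card ≤ n := by
    set T := Finset.univ.filter (fun i => ¬ α i = ∅) with hTdef
    have h1 : T.card ≤ ∑ i ∈ T, (α i).card := by
      have : ∀ i ∈ T, 1 ≤ (α i).card := by
        intro i hi
        rw [hTdef, Finset.mem_filter] at hi
        exact Finset.card_pos.2 (Finset.nonempty_iff_ne_empty.2 hi.2)
      calc T.card = ∑ _i ∈ T, 1 := by simp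
        _ ≤ ∑ i ∈ T, (α i).card := Finset.sum_le_sum this
    have h2 : ∑ i ∈ T, (α i).card = (T.biUnion α).card :=
      (Finset.card_biUnion (fun i _ j _ h => hdis i j h)).symm
    have h3 : T.biUnion α ⊆ Finset.univ.image (Sum.inr : Fin n → Idx n) := by
      intro x hx
      rcases Finset.mem_biUnion.1 hx with ⟨i, _, hxi⟩
      have := hright i x hxi
      cases x with
      | inl v => simp at this
      | inr v => simp
    have h4 : (Finset.univ.image (Sum.inr : Fin n → Idx n)).card = n := by
      rw [Finset.card_image_of_injective _ Sum.inr_injective, Finset.card_univ, Fintype.card_fin]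
    rw [h2] at h1
    exact h1.trans (le_of_le_of_eq (Finset.card_le_card h3) h4)
  have hpos : (0 : ℝ) < (n : ℝ) * ((n : ℝ) + 1) := by positivity
  have hΔiff : Δ = 0 ↔ ∀ i, α i ≠ ∅ := by
    rw [hΔ, Finset.card_eq_zero, Finset.filter_eq_empty_iff]
    simp
  constructor
  · intro hneg
    have hq : (n : ℝ) - (p : ℝ) - 1 + 2 * (Δ : ℝ) < 0 := by nlinarith
    have hq' : n + 2 * Δ < p + 1 := by
      have : ((n + 2 * Δ : ℕ) : ℝ) < ((p + 1 : ℕ) : ℝ) := by push_cast; linarith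
      exact_mod_cast this
    have hΔ0 : Δ = 0 := by omega
    exact ⟨by omega, hΔiff.1 hΔ0⟩
  · rintro ⟨hpn, hne⟩
    have hΔ0 : Δ = 0 := hΔiff.2 hne
    rw [hΔ0, hpn]
    push_cast
    nlinarith
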